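/- Let X be a CAT(0) cube complex with no extremal vertices and let x1, x2, y ∈ ∂X satisfy m(x1,x2,y) ∈ X. Then x1 and x2 fail to be opposite with respect to y if and only if there exists a point z ∈ ∂X and a,b,c ∈ ℕ ∪ {+∞} such that crt(x1,x2,y,z) = ⟪a:b:c⟫ and a < min{b,c} < +∞. -/

import Mathlib

/-!
We use the standard combinatorial model of a CAT(0) cube complex: it is identified
with its vertex set endowed with the combinatorial (ℓ¹) metric, i.e. with a median
graph `G` on a vertex type `V`.  Halfspaces are realised as the vertex sets of the
two sides of the hyperplane dual to an edge, the Roller compactification `X̄` is the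
set of ultrafilters of halfspaces, vertices embedding via principal ultrafilters,
and the Roller boundary `∂X` consists of the non-principal ultrafilters.
-/

open scoped ENNReal
open Set

namespace CCCR

variable {V V' : Type*}

/-- The interval between two vertices w.r.t. the combinatorial metric. -/
def vInterval (G : SimpleGraph V) (u v : V) : Set V :=
  {w : V | G.dist u w + G.dist w v = G.dist u v}

/-- Combinatorial model of a CAT(0) cube complex (identified with its vertex set,
endowed with the combinatorial metric): a connected median graph. -/
def IsCCC (G : SimpleGraph V) : Prop :=
  G.Connected ∧ ∀ x y z : V, ∃! m : V,
    m ∈ vInterval G x y ∧ m ∈ vInterval G y z ∧ m ∈ vInterval G z x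

/-- Halfspaces of the cube complex: the sides of the hyperplane dual to an edge. -/
def IsHalfspace (G : SimpleGraph V) (h : Set V) : Prop :=
  ∃ u v : V, G.Adj u v ∧ h = {w : V | G.dist w v < G.dist w u}

/-- The halfspace dual to the (oriented) edge `(u,v)` containing `v`. -/
def edgeHalf (G : SimpleGraph V) (u v : V) : Set V :=
  {w : V | G.dist w v < G.dist w u}

/-- The hyperplane (wall) dual to the edge `(u,v)`, recorded as its pair of sides. -/
def wallOf (G : SimpleGraph V) (u v : V) : Set (Set V) :=
  {edgeHalf G u v, (edgeHalf G u v)ᶜ}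

/-- Two (necessarily distinct) hyperplanes, with respective sides `h` and `k`,
are transverse: all four quarter-spaces are nonempty. -/
def Transv (h k : Set V) : Prop :=
  (h ∩ k).Nonempty ∧ (h ∩ kᶜ).Nonempty ∧ (hᶜ ∩ k).Nonempty ∧ (hᶜ ∩ kᶜ).Nonempty

/-- An ultrafilter of halfspaces: a point of the Roller compactification X̄.
It contains exactly one side of each hyperplane, and any two members intersect. -/
def IsUltra (G : SimpleGraph V) (σ : Set (Set V)) : Prop :=
  (∀ h ∈ σ, IsHalfspace G h) ∧
  (∀ h : Set V, IsHalfspace G h → (h ∈ σ ↔ hᶜ ∉ σ)) ∧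
  (∀ h ∈ σ, ∀ k ∈ σ, (h ∩ k).Nonempty)

/-- The principal ultrafilter of a vertex, i.e. the image of `v` in X̄. -/
def princ (G : SimpleGraph V) (v : V) : Set (Set V) :=
  {h : Set V | IsHalfspace G h ∧ v ∈ h}

/-- A point of the Roller boundary ∂X = X̄ ∖ X: a non-principal ultrafilter. -/
def IsBdryPt (G : SimpleGraph V) (σ : Set (Set V)) : Prop :=
  IsUltra G σ ∧ ∀ v : V, σ ≠ princ G v

/-- The Roller boundary ∂X as a type. -/
abbrev Bdry (G : SimpleGraph V) : Type _ := {σ : Set (Set V) // IsBdryPt G σ}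

/-- The Gromov product (x·y)_v = #𝒲(v | x, y) ∈ ℕ ∪ {+∞}, counted through the
sides containing both x and y but not v. -/
noncomputable def grom (_G : SimpleGraph V) (v : V) (x y : Set (Set V)) : ℕ∞ :=
  {h : Set V | h ∈ x ∧ h ∈ y ∧ v ∉ h}.encard

/-- The embedding ℕ ∪ {+∞} → ℤ ∪ {±∞}. -/
noncomputable def toE (n : ℕ∞) : EReal := ((n : ℝ≥0∞) : EReal)

/-- The cross ratio cr_v(x,y,z,w) = (x·z)_v + (y·w)_v − (x·w)_v − (y·z)_v ∈ ℤ ∪ {±∞}. -/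
noncomputable def crv (G : SimpleGraph V) (v : V) (x y z w : Set (Set V)) : EReal :=
  toE (grom G v x z) + toE (grom G v y w) - toE (grom G v x w) - toE (grom G v y z)

/-- The triple of sums of Gromov products attached to a 4-tuple. -/
noncomputable def tripod (G : SimpleGraph V) (v : V) (x y z w : Set (Set V)) :
    ℕ∞ × ℕ∞ × ℕ∞ :=
  (grom G v x y + grom G v z w, grom G v x z + grom G v y w, grom G v x w + grom G v y z)

/-- (x,y,z,w) ∈ 𝒜 w.r.t. the basepoint v: at most one of the three sums is infinite. -/
def inA (G : SimpleGraph V) (v : V) (x y z w : Set (Set V)) : Prop :=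
  ((tripod G v x y z w).1 ≠ ⊤ ∧ (tripod G v x y z w).2.1 ≠ ⊤) ∨
  ((tripod G v x y z w).1 ≠ ⊤ ∧ (tripod G v x y z w).2.2 ≠ ⊤) ∨
  ((tripod G v x y z w).2.1 ≠ ⊤ ∧ (tripod G v x y z w).2.2 ≠ ⊤)

/-- (x,y,z,w) ∈ 𝒜 (this is independent of the basepoint). -/
def memA (G : SimpleGraph V) (x y z w : Set (Set V)) : Prop :=
  ∀ v : V, inA G v x y z w

/-- Two triples in (ℕ ∪ {+∞})³ are equivalent if they differ by adding a constant
n ∈ ℕ to all three entries. -/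
def TripEquiv (p q : ℕ∞ × ℕ∞ × ℕ∞) : Prop :=
  (∃ n : ℕ, p.1 = q.1 + (n : ℕ∞) ∧ p.2.1 = q.2.1 + (n : ℕ∞) ∧ p.2.2 = q.2.2 + (n : ℕ∞)) ∨
  (∃ n : ℕ, q.1 = p.1 + (n : ℕ∞) ∧ q.2.1 = p.2.1 + (n : ℕ∞) ∧ q.2.2 = p.2.2 + (n : ℕ∞))

/-- crt(x,y,z,w) = ⟪a:b:c⟫ (the cross ratio triple is independent of the basepoint,
so we require the equality of classes at every basepoint). -/
def crtEq (G : SimpleGraph V) (x y z w : Set (Set V)) (a b c : ℕ∞) : Prop :=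
  ∀ v : V, TripEquiv (tripod G v x y z w) (a, b, c)

/-- The median of three points of X̄. -/
def med (x y z : Set (Set V)) : Set (Set V) := (x ∩ y) ∪ (y ∩ z) ∪ (z ∩ x)

/-- The interval I(x,y) ⊆ X̄ between two points of X̄. -/
def rInterval (G : SimpleGraph V) (x y : Set (Set V)) : Set (Set (Set V)) :=
  {σ : Set (Set V) | IsUltra G σ ∧ x ∩ y ⊆ σ}

/-- `Op G x y z` : x and y are opposite with respect to z, i.e. the median
m = m(x,y,z) lies in X and I(x,y) = I(x,m) ∪ I(m,y). -/
def Op (G : SimpleGraph V) (x y z : Set (Set V)) : Prop :=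
  (∃ p : V, med x y z = princ G p) ∧
  rInterval G x y = rInterval G x (med x y z) ∪ rInterval G (med x y z) y

/-- A geodesic ray (based at `r 0`). -/
def IsGeodRay (G : SimpleGraph V) (r : ℕ → V) : Prop :=
  (∀ n : ℕ, G.Adj (r n) (r (n + 1))) ∧
  ∀ m n : ℕ, m ≤ n → G.dist (r m) (r n) = n - m

/-- A bi-infinite geodesic line. -/
def IsGeodLine (G : SimpleGraph V) (L : ℤ → V) : Prop :=
  (∀ n : ℤ, G.Adj (L n) (L (n + 1))) ∧
  ∀ m n : ℤ, m ≤ n → (G.dist (L m) (L n) : ℤ) = n - m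

/-- The set 𝒲(r) of hyperplanes crossed by (the edges of) a ray. -/
def rayWalls (G : SimpleGraph V) (r : ℕ → V) : Set (Set (Set V)) :=
  {W : Set (Set V) | ∃ n : ℕ, W = wallOf G (r n) (r (n + 1))}

/-- A hyperplane is adjacent to `v` if it is dual to an edge incident to `v`. -/
def WallAdjTo (G : SimpleGraph V) (v : V) (W : Set (Set V)) : Prop :=
  ∃ u : V, G.Adj v u ∧ W = wallOf G v u

/-- A straight ray: no two of the hyperplanes it crosses are transverse. -/
def RayStraight (G : SimpleGraph V) (r : ℕ → V) : Prop :=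
  ∀ m n : ℕ, ¬ Transv (edgeHalf G (r m) (r (m + 1))) (edgeHalf G (r n) (r (n + 1)))

/-- A straight line: no two of the hyperplanes it crosses are transverse. -/
def LineStraight (G : SimpleGraph V) (L : ℤ → V) : Prop :=
  ∀ m n : ℤ, ¬ Transv (edgeHalf G (L m) (L (m + 1))) (edgeHalf G (L n) (L (n + 1)))

/-- The endpoint at infinity r⁺ ∈ ∂X of a ray: the ultrafilter of those halfspaces
containing all but finitely many of its vertices. -/
def rayEnd (G : SimpleGraph V) (r : ℕ → V) : Set (Set V) :=
  {h : Set V | IsHalfspace G h ∧ ∃ N : ℕ, ∀ n : ℕ, N ≤ n → r n ∈ h}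

/-- A straight point of the Roller boundary: the endpoint at infinity of a straight ray. -/
def IsStraightPt (G : SimpleGraph V) (x : Set (Set V)) : Prop :=
  ∃ r : ℕ → V, IsGeodRay G r ∧ RayStraight G r ∧ rayEnd G r = x

/-- x and y are the two endpoints at infinity of the line L. -/
def LineEnds (G : SimpleGraph V) (L : ℤ → V) (x y : Set (Set V)) : Prop :=
  rayEnd G (fun n : ℕ => L (n : ℤ)) = x ∧ rayEnd G (fun n : ℕ => L (-(n : ℤ))) = y

/-- The edges from `v` to `a` and from `v` to `b` span a square. -/
def SpansSquare (G : SimpleGraph V) (v a b : V) : Prop :=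
  ∃ w : V, w ≠ v ∧ G.Adj a w ∧ G.Adj b w

/-- An extremal vertex: some edge at `v` spans a square with every other edge at `v`. -/
def Extremal (G : SimpleGraph V) (v : V) : Prop :=
  ∃ a : V, G.Adj v a ∧ ∀ b : V, G.Adj v b → b ≠ a → SpansSquare G v a b

/-- The cube complex has no extremal vertices. -/
def NoExtremal (G : SimpleGraph V) : Prop := ∀ v : V, ¬ Extremal G v

/-- A skinny vertex: exactly two incident edges. -/
def Skinny (G : SimpleGraph V) (v : V) : Prop := {u : V | G.Adj v u}.encard = 2

/-- A skinny ray: a geodesic ray whose initial vertex has at least three incident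
edges and all of whose other vertices are skinny. -/
def IsSkinnyRay (G : SimpleGraph V) (r : ℕ → V) : Prop :=
  IsGeodRay G r ∧ 3 ≤ {u : V | G.Adj (r 0) u}.encard ∧ ∀ n : ℕ, 1 ≤ n → Skinny G (r n)

/-- (The vertex set of) a cube of the complex: a subset inducing a hypercube graph. -/
def IsCube (G : SimpleGraph V) (c : Set V) : Prop :=
  ∃ (n : ℕ) (e : c ≃ (Fin n → Bool)),
    ∀ a b : c, G.Adj (a : V) (b : V) ↔ ∃! i : Fin n, e a i ≠ e b i

/-- A maximal cube. -/
def IsMaxCube (G : SimpleGraph V) (c : Set V) : Prop :=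
  IsCube G c ∧ ∀ c' : Set V, IsCube G c' → c ⊆ c' → c' = c

/-- Completeness: there is no infinite ascending chain of cubes. -/
def CubeComplete (G : SimpleGraph V) : Prop :=
  ¬ ∃ c : ℕ → Set V, (∀ n : ℕ, IsCube G (c n)) ∧ ∀ n : ℕ, c n ⊂ c (n + 1)

/-- No free faces: no non-maximal cube is contained in a unique maximal cube. -/
def NoFreeFaces (G : SimpleGraph V) : Prop :=
  ∀ c : Set V, IsCube G c → ¬ IsMaxCube G c → ¬ ∃! m : Set V, IsMaxCube G m ∧ c ⊆ m

/-- #𝒲(x, z | y, w): the number of hyperplanes separating x and z from y and w,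
counted through the sides containing x and z. -/
noncomputable def sepCount (x z y w : Set (Set V)) : ℕ∞ :=
  {h : Set V | h ∈ x ∧ h ∈ z ∧ h ∉ y ∧ h ∉ w}.encard

/-- A Möbius map between Roller boundaries: it maps 𝒜(X) into 𝒜(Y) and preserves
cross ratios. -/
def Mobius (G : SimpleGraph V) (G' : SimpleGraph V') (f : Bdry G → Bdry G') : Prop :=
  ∀ x y z w : Bdry G, memA G x.1 y.1 z.1 w.1 →
    memA G' (f x).1 (f y).1 (f z).1 (f w).1 ∧
    ∀ (v : V) (v' : V'),
      crv G' v' (f x).1 (f y).1 (f z).1 (f w).1 = crv G v x.1 y.1 z.1 w.1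

/-- The induced action of a cubical isomorphism on X̄: an ultrafilter is mapped to
the set of images of its halfspaces. -/
def mapUltra (φ : V → V') (σ : Set (Set V)) : Set (Set V') :=
  (fun h : Set V => φ '' h) '' σ

/-- The standard cubulation of ℝ: vertex set ℤ, edges between consecutive integers. -/
def zline : SimpleGraph ℤ := SimpleGraph.fromRel (fun m n => n = m + 1)

end CCCR

/-!
Let `p` be the vertex `m(x₁, x₂, y)`. The Gromov products `(x₁·x₂)_p`, `(x₁·y)_p`, `(x₂·y)_p`
vanish, so `crt(x₁, x₂, y, z) = ⟪(y·z)_p : (x₂·z)_p : (x₁·z)_p⟫`; this triple represents the cross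
ratio triple at every basepoint because moving the basepoint across one hyperplane shifts all three
entries by the same amount.

If `(x₁·z)_p` and `(x₂·z)_p` are nonzero, halfspaces `k₁ ∈ x₁ ∩ z` and `k₂ ∈ x₂ ∩ z` avoiding `p`
show that `m(x₁, x₂, z) ∈ I(x₁, x₂)` lies neither in `I(x₁, p)` nor in `I(p, x₂)`.

Conversely, a point `σ ∈ I(x₁, x₂)` outside `I(x₁, p) ∪ I(p, x₂)` yields halfspaces `A ∈ x₁ ∩ y`
and `B ∈ x₂ ∩ y` whose complements contain `σ` and a common vertex `q`. The point
`μ = m(q, x₂, σ)` satisfies `(y·μ)_p = 0`, `(x₁·μ)_p < ∞` and `Aᶜ, Bᶜ ∈ μ`, and these properties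
pass to every `z ∈ ∂X` with `μ ∈ I(x₁, z) ∩ I(y, z)`, for which then
`crt = ⟪0 : (x₂·z)_p : (x₁·z)_p⟫` with `0 < (x₂·z)_p` and `0 < (x₁·z)_p < ∞`. Such a `z` is `μ`
itself unless `μ` is a vertex `w`. In that case a maximal halfspace of `x₁ ∩ y` missing `w` is
dual to an edge at `w`, and as `w` is not extremal some edge `(w, b)` spans no square with it, so
the halfspace of `(w, b)` containing `b` lies in neither `x₁` nor `y`. Continuing from `b` by
turns that span no square gives a ray crossing strictly nested hyperplanes inside that
halfspace; its endpoint is the required `z`.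
-/

namespace CCCR

open SimpleGraph

variable {V : Type*} {G : SimpleGraph V}

section MedianGraph

theorem exists_adj_dist_eq_of_dist_eq_succ {v b : V} {n : ℕ} (h : G.dist v b = n + 1) :
    ∃ v', G.Adj v v' ∧ G.dist v' b = n := by
  obtain ⟨p, hp⟩ := exists_walk_of_dist_ne_zero (by omega : G.dist v b ≠ 0)
  have hvb : v ≠ b := by rintro rfl; simp at h
  obtain ⟨v', hadj, q, rfl⟩ := p.exists_eq_cons_of_ne hvb
  refine ⟨v', hadj, le_antisymm ?_ ?_⟩
  · have := dist_le q
    simp only [Walk.length_cons] at hp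
    omega
  · have := hadj.reachable.dist_triangle_left b
    rw [dist_eq_one_iff_adj.2 hadj] at this
    omega

theorem IsCCC.eq_of_dist_eq_zero (hG : IsCCC G) {u v : V} (h : G.dist u v = 0) : u = v :=
  hG.1.dist_eq_zero_iff.1 h

theorem IsCCC.exists_median (hG : IsCCC G) (x y z : V) :
    ∃ m, G.dist x m + G.dist m y = G.dist x y ∧ G.dist y m + G.dist m z = G.dist y z ∧
      G.dist z m + G.dist m x = G.dist z x :=
  (hG.2 x y z).exists

theorem IsCCC.dist_eq_add_one_or (hG : IsCCC G) {u v : V} (h : G.Adj u v) (w : V) :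
    G.dist w v = G.dist w u + 1 ∨ G.dist w u = G.dist w v + 1 := by
  obtain ⟨m, h1, h2, h3⟩ := hG.exists_median u v w
  have huv : G.dist u v = 1 := dist_eq_one_iff_adj.2 h
  have hvu : G.dist v u = 1 := dist_eq_one_iff_adj.2 h.symm
  have := G.dist_comm (u := w) (v := u)
  have := G.dist_comm (u := w) (v := v)
  rcases (by omega : G.dist u m = 0 ∨ G.dist m v = 0) with hm | hm
  · obtain rfl := hG.eq_of_dist_eq_zero hm
    omega
  · obtain rfl := hG.eq_of_dist_eq_zero hm
    omega

theorem IsCCC.dist_eq_add_one_or' (hG : IsCCC G) {u v : V} (h : G.Adj u v) (w : V) :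
    G.dist v w = G.dist u w + 1 ∨ G.dist u w = G.dist v w + 1 := by
  rw [G.dist_comm (u := v), G.dist_comm (u := u)]
  exact hG.dist_eq_add_one_or h w

theorem IsCCC.dist_eq_two (hG : IsCCC G) {v a b : V} (ha : G.Adj v a) (hb : G.Adj v b)
    (hab : a ≠ b) : G.dist a b = 2 := by
  have hva : G.dist v a = 1 := dist_eq_one_iff_adj.2 ha
  have hvb : G.dist v b = 1 := dist_eq_one_iff_adj.2 hb
  have htri : G.dist a b ≤ G.dist a v + G.dist v b := hG.1.dist_triangle
  have hne0 : G.dist a b ≠ 0 := fun h => hab (hG.eq_of_dist_eq_zero h)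
  have hne1 : G.dist a b ≠ 1 := fun h => by
    have := hG.dist_eq_add_one_or (dist_eq_one_iff_adj.1 h) v
    omega
  have := G.dist_comm (u := a) (v := v)
  omega

/-- The quadrangle condition, in the strong form that holds in median graphs. -/
theorem IsCCC.exists_adj_adj_dist_lt (hG : IsCCC G) {x u w : V} (huw : G.dist u w = 2)
    (hxuw : G.dist x u = G.dist x w) :
    ∃ m, G.Adj u m ∧ G.Adj w m ∧ G.dist x m + 1 = G.dist x u := by
  obtain ⟨m, h1, h2, h3⟩ := hG.exists_median u w x
  have := G.dist_comm (u := m) (v := u)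
  have := G.dist_comm (u := w) (v := m)
  have := G.dist_comm (u := w) (v := x)
  have := G.dist_comm (u := m) (v := x)
  exact ⟨m, dist_eq_one_iff_adj.1 (by omega), dist_eq_one_iff_adj.1 (by omega), by omega⟩

theorem IsCCC.eq_of_adj_of_adj (hG : IsCCC G) {a b c u v : V} (hab : a ≠ b) (hbc : b ≠ c)
    (hca : c ≠ a) (hau : G.Adj a u) (hbu : G.Adj b u) (hcu : G.Adj c u) (hav : G.Adj a v)
    (hbv : G.Adj b v) (hcv : G.Adj c v) : u = v := by
  have hd : ∀ {s t : V}, G.Adj s u → G.Adj t u → s ≠ t → G.Adj s v → G.Adj t v →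
      G.dist s u + G.dist u t = G.dist s t ∧ G.dist s v + G.dist v t = G.dist s t :=
    fun hsu htu hst hsv htv => by
      rw [hG.dist_eq_two hsu.symm htu.symm hst, dist_eq_one_iff_adj.2 hsu,
        dist_eq_one_iff_adj.2 htu.symm, dist_eq_one_iff_adj.2 hsv, dist_eq_one_iff_adj.2 htv.symm]
      simp
  obtain ⟨hab₁, hab₂⟩ := hd hau hbu hab hav hbv
  obtain ⟨hbc₁, hbc₂⟩ := hd hbu hcu hbc hbv hcv
  obtain ⟨hca₁, hca₂⟩ := hd hcu hau hca hcv hav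
  exact (hG.2 a b c).unique ⟨hab₁, hbc₁, hca₁⟩ ⟨hab₂, hbc₂, hca₂⟩

end MedianGraph

section Halfspaces

theorem mem_edgeHalf {u v w : V} : w ∈ edgeHalf G u v ↔ G.dist w v < G.dist w u := Iff.rfl

theorem mem_edgeHalf' {u v w : V} : w ∈ edgeHalf G u v ↔ G.dist v w < G.dist u w := by
  rw [mem_edgeHalf, G.dist_comm (u := w), G.dist_comm (u := w)]

theorem right_mem_edgeHalf {u v : V} (h : G.Adj u v) : v ∈ edgeHalf G u v := by
  simp [mem_edgeHalf, dist_eq_one_iff_adj.2 h.symm]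

theorem left_notMem_edgeHalf (u v : V) : u ∉ edgeHalf G u v := by
  simp [mem_edgeHalf]

theorem isHalfspace_edgeHalf {u v : V} (h : G.Adj u v) : IsHalfspace G (edgeHalf G u v) :=
  ⟨u, v, h, rfl⟩

theorem IsHalfspace.nonempty {h : Set V} (hh : IsHalfspace G h) : h.Nonempty := by
  obtain ⟨u, v, huv, rfl⟩ := hh
  exact ⟨v, right_mem_edgeHalf huv⟩

theorem IsCCC.compl_edgeHalf (hG : IsCCC G) {u v : V} (h : G.Adj u v) :
    (edgeHalf G u v)ᶜ = edgeHalf G v u := by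
  ext w
  have := hG.dist_eq_add_one_or h w
  simp only [Set.mem_compl_iff, mem_edgeHalf]
  omega

theorem IsHalfspace.compl (hG : IsCCC G) {h : Set V} (hh : IsHalfspace G h) : IsHalfspace G hᶜ := by
  obtain ⟨u, v, huv, rfl⟩ := hh
  exact hG.compl_edgeHalf huv ▸ isHalfspace_edgeHalf huv.symm

theorem IsCCC.edgeHalf_subset_of_square (hG : IsCCC G) {u v v' u' : V} (huv : G.Adj u v)
    (hvv' : G.Adj v v') (hv'u' : G.Adj v' u') (hu'u : G.Adj u' u) (huv' : u ≠ v')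
    (hvu' : v ≠ u') : edgeHalf G u v ⊆ edgeHalf G u' v' := by
  intro x hx
  rw [mem_edgeHalf] at hx ⊢
  have e1 := hG.dist_eq_add_one_or huv x
  have e2 := hG.dist_eq_add_one_or hu'u x
  have e3 := hG.dist_eq_add_one_or hvv' x
  have e4 := hG.dist_eq_add_one_or hv'u' x
  by_contra hx'
  -- otherwise `v` and `u'` are equidistant from `x`, and the quadrangle condition provides
  -- a third common neighbour of `v` and `u'`
  obtain ⟨m, hvm, hu'm, hxm⟩ :=
    hG.exists_adj_adj_dist_lt (x := x) (hG.dist_eq_two huv hu'u.symm hvu') (by omega)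
  have hum : u ≠ m := by rintro rfl; omega
  have hv'm : v' ≠ m := by rintro rfl; omega
  exact hvu' (hG.eq_of_adj_of_adj huv' hv'm hum.symm huv hvv'.symm hvm.symm hu'u.symm hv'u'
    hu'm.symm)

theorem IsCCC.edgeHalf_eq_of_square (hG : IsCCC G) {u v v' u' : V} (huv : G.Adj u v)
    (hvv' : G.Adj v v') (hv'u' : G.Adj v' u') (hu'u : G.Adj u' u) (huv' : u ≠ v')
    (hvu' : v ≠ u') : edgeHalf G u v = edgeHalf G u' v' :=
  (hG.edgeHalf_subset_of_square huv hvv' hv'u' hu'u huv' hvu').antisymm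
    (hG.edgeHalf_subset_of_square hv'u'.symm hvv'.symm huv.symm hu'u.symm hvu'.symm huv'.symm)

theorem IsCCC.edgeHalf_eq_of_mem_of_notMem (hG : IsCCC G) {a b u v : V} (hab : G.Adj a b)
    (huv : G.Adj u v) (hv : v ∈ edgeHalf G a b) (hu : u ∉ edgeHalf G a b) :
    edgeHalf G a b = edgeHalf G u v := by
  obtain ⟨n, hn⟩ : ∃ n, G.dist b v = n := ⟨_, rfl⟩
  rw [mem_edgeHalf'] at hv hu
  have hv_ab := hG.dist_eq_add_one_or' hab v
  have hu_ab := hG.dist_eq_add_one_or' hab u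
  induction n generalizing u v with
  | zero =>
    obtain rfl := hG.eq_of_dist_eq_zero hn
    have hbu : G.dist b u = 1 := dist_eq_one_iff_adj.2 huv.symm
    obtain rfl : a = u := hG.eq_of_dist_eq_zero (by omega)
    rfl
  | succ n ih =>
    have hua := hG.dist_eq_add_one_or huv a
    have hub := hG.dist_eq_add_one_or huv b
    -- step from `v` towards `b` and close the square `u v v₁ m` towards `a`; the edge `(m, v₁)`
    -- is closer to `b` than `(u, v)`
    obtain ⟨v₁, hvv₁, hv₁b⟩ := exists_adj_dist_eq_of_dist_eq_succ (G.dist_comm.trans hn)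
    rw [G.dist_comm] at hv₁b
    have hv₁a := hG.dist_eq_add_one_or hvv₁ a
    have hv₁_ab := hG.dist_eq_add_one_or' hab v₁
    have huv₁ : u ≠ v₁ := by rintro rfl; omega
    obtain ⟨m, hum, hv₁m, ham⟩ :=
      hG.exists_adj_adj_dist_lt (x := a) (hG.dist_eq_two huv.symm hvv₁ huv₁) (by omega)
    have hmb := hG.dist_eq_add_one_or hum b
    have hm_ab := hG.dist_eq_add_one_or' hab m
    have hvm : v ≠ m := by rintro rfl; omega
    rw [ih hv₁m.symm (by omega) (by omega) hv₁b (by omega) (by omega),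
      hG.edgeHalf_eq_of_square huv hvv₁ hv₁m hum.symm huv₁ hvm]

theorem IsHalfspace.eq_edgeHalf (hG : IsCCC G) {h : Set V} (hh : IsHalfspace G h) {u v : V}
    (huv : G.Adj u v) (hv : v ∈ h) (hu : u ∉ h) : h = edgeHalf G u v := by
  obtain ⟨a, b, hab, rfl⟩ := hh
  exact hG.edgeHalf_eq_of_mem_of_notMem hab huv hv hu

theorem IsCCC.spansSquare_of_mem_edgeHalf (hG : IsCCC G) {v a b x : V} (hva : G.Adj v a)
    (hvb : G.Adj v b) (hab : a ≠ b) (hxa : x ∈ edgeHalf G v a) (hxb : x ∈ edgeHalf G v b) :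
    SpansSquare G v a b := by
  rw [mem_edgeHalf] at hxa hxb
  have := hG.dist_eq_add_one_or hva x
  have := hG.dist_eq_add_one_or hvb x
  obtain ⟨m, ham, hbm, hxm⟩ :=
    hG.exists_adj_adj_dist_lt (x := x) (hG.dist_eq_two hva hvb hab) (by omega)
  exact ⟨m, by rintro rfl; omega, ham, hbm⟩

theorem IsCCC.finite_separating (hG : IsCCC G) (p q : V) :
    {h : Set V | IsHalfspace G h ∧ q ∈ h ∧ p ∉ h}.Finite := by
  obtain ⟨W⟩ := hG.1.preconnected p q
  induction W with
  | nil => exact Set.finite_empty.subset fun h ⟨_, hq, hp⟩ => hp hq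
  | @cons u u' q hadj W ih =>
    refine (ih.insert (edgeHalf G u u')).subset fun h ⟨hh, hq, hu⟩ => ?_
    by_cases hu' : u' ∈ h
    · exact Or.inl (hh.eq_edgeHalf hG hadj hu' hu)
    · exact Or.inr ⟨hh, hq, hu'⟩

end Halfspaces

section Ultrafilters

theorem IsUltra.compl_mem_iff {σ : Set (Set V)} (hσ : IsUltra G σ) {h : Set V}
    (hh : IsHalfspace G h) : hᶜ ∈ σ ↔ h ∉ σ := by
  have := hσ.2.1 h hh
  tauto

theorem IsUltra.compl_mem {σ : Set (Set V)} (hσ : IsUltra G σ) {h : Set V}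
    (hh : IsHalfspace G h) (hnot : h ∉ σ) : hᶜ ∈ σ :=
  (hσ.compl_mem_iff hh).2 hnot

theorem IsUltra.compl_notMem {σ : Set (Set V)} (hσ : IsUltra G σ) {h : Set V} (hmem : h ∈ σ) :
    hᶜ ∉ σ :=
  (hσ.2.1 h (hσ.1 h hmem)).1 hmem

theorem IsUltra.mem_of_subset {σ : Set (Set V)} (hσ : IsUltra G σ) {g k : Set V} (hg : g ∈ σ)
    (hk : IsHalfspace G k) (hgk : g ⊆ k) : k ∈ σ := by
  by_contra hkσ
  obtain ⟨x, hxg, hxk⟩ := hσ.2.2 g hg kᶜ (hσ.compl_mem hk hkσ)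
  exact hxk (hgk hxg)

theorem isUltra_princ (hG : IsCCC G) (w : V) : IsUltra G (princ G w) :=
  ⟨fun _ hh => hh.1, fun h hh => ⟨fun hw hw' => hw'.2 hw.2, fun hn => ⟨hh, by
    by_contra hwn
    exact hn ⟨hh.compl hG, hwn⟩⟩⟩, fun _ hh _ hk => ⟨w, hh.2, hk.2⟩⟩

theorem mem_med {x y z : Set (Set V)} {h : Set V} :
    h ∈ med x y z ↔ (h ∈ x ∧ h ∈ y) ∨ (h ∈ y ∧ h ∈ z) ∨ (h ∈ z ∧ h ∈ x) := by
  simp [med, or_assoc]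

theorem mem_med_of_mem₁₂ {x y z : Set (Set V)} {g : Set V} (hx : g ∈ x) (hy : g ∈ y) :
    g ∈ med x y z :=
  Or.inl (Or.inl ⟨hx, hy⟩)

theorem mem_med_of_mem₂₃ {x y z : Set (Set V)} {g : Set V} (hy : g ∈ y) (hz : g ∈ z) :
    g ∈ med x y z :=
  Or.inl (Or.inr ⟨hy, hz⟩)

theorem mem_med_of_mem₁₃ {x y z : Set (Set V)} {g : Set V} (hx : g ∈ x) (hz : g ∈ z) :
    g ∈ med x y z :=
  Or.inr ⟨hz, hx⟩

theorem mem_of_med_eq_princ {x y z : Set (Set V)} {p : V} (hm : med x y z = princ G p)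
    {g : Set V} (hg : g ∈ med x y z) : p ∈ g :=
  (hm ▸ hg).2

theorem IsUltra.med {x y z : Set (Set V)} (hx : IsUltra G x) (hy : IsUltra G y)
    (hz : IsUltra G z) : IsUltra G (med x y z) := by
  refine ⟨fun h hh => ?_, fun h hh => ?_, fun h hh k hk => ?_⟩
  · rcases mem_med.1 hh with ⟨h1, -⟩ | ⟨h1, -⟩ | ⟨h1, -⟩
    exacts [hx.1 h h1, hy.1 h h1, hz.1 h h1]
  · have := hx.2.1 h hh
    have := hy.2.1 h hh
    have := hz.2.1 h hh
    rw [mem_med, mem_med]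
    tauto
  · rw [mem_med] at hh hk
    rcases hh with ⟨h1, h2⟩ | ⟨h1, h2⟩ | ⟨h1, h2⟩ <;>
      rcases hk with ⟨k1, k2⟩ | ⟨k1, k2⟩ | ⟨k1, k2⟩ <;>
      first
        | exact hx.2.2 h ‹_› k ‹_›
        | exact hy.2.2 h ‹_› k ‹_›
        | exact hz.2.2 h ‹_› k ‹_›

theorem mem_of_mem_rInterval {x z μ : Set (Set V)} (hx : IsUltra G x) (hz : IsUltra G z)
    (hμ : μ ∈ rInterval G x z) {k : Set V} (hkμ : k ∈ μ) (hkx : k ∉ x) : k ∈ z := by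
  have hk := hμ.1.1 k hkμ
  by_contra hkz
  exact hμ.1.compl_notMem hkμ (hμ.2 ⟨hx.compl_mem hk hkx, hz.compl_mem hk hkz⟩)

end Ultrafilters

section HyperplanesAtAVertex

theorem IsCCC.subset_edgeHalf_of_forall_dist_le (hG : IsCCC G) {h : Set V} (hh : IsHalfspace G h)
    {w a b c : V} (hb : b ∈ h) (hmin : ∀ t ∈ h, G.dist w b ≤ G.dist w t) (hba : G.Adj b a)
    (hac : G.Adj a c) (hwa : G.dist w a + 1 = G.dist w b) (hwc : G.dist w c + 2 = G.dist w b) :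
    h ⊆ edgeHalf G c a := by
  have ha : a ∉ h := fun ha => by have := hmin a ha; omega
  have hcb : c ≠ b := by rintro rfl; omega
  intro x hx
  have hxb : G.dist x b < G.dist x a := by rwa [hh.eq_edgeHalf hG hba.symm hb ha] at hx
  rw [mem_edgeHalf]
  by_contra hxc
  have := hG.dist_eq_add_one_or hac x
  have := hG.dist_eq_add_one_or hba x
  -- the quadrangle condition yields a common neighbour `t` of `c` and `b`; it lies in `h` and is
  -- closer to `w` than `b`
  obtain ⟨t, hct, hbt, hxt⟩ :=
    hG.exists_adj_adj_dist_lt (x := x) (hG.dist_eq_two hac hba.symm hcb) (by omega)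
  have ht : t ∈ h := by
    by_contra ht
    have := hh.eq_edgeHalf hG hbt.symm hb ht ▸ hx
    rw [mem_edgeHalf] at this
    omega
  have := hmin t ht
  have : G.dist w t ≤ G.dist w c + G.dist c t := hG.1.dist_triangle
  rw [dist_eq_one_iff_adj.2 hct] at this
  omega

theorem IsCCC.exists_adj_eq_edgeHalf (hG : IsCCC G) {h : Set V} (hh : IsHalfspace G h) {w : V}
    (hw : w ∉ h) (hmax : ∀ g : Set V, IsHalfspace G g → h ⊆ g → g = h ∨ w ∈ g) :
    ∃ b, G.Adj w b ∧ h = edgeHalf G w b := by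
  classical
  obtain ⟨b₀, hb₀⟩ := hh.nonempty
  have hex : ∃ k, ∃ b ∈ h, G.dist w b = k := ⟨_, b₀, hb₀, rfl⟩
  obtain ⟨b, hb, hwb⟩ := Nat.find_spec hex
  have hmin : ∀ t ∈ h, G.dist w b ≤ G.dist w t :=
    fun t ht => hwb ▸ Nat.find_min' hex ⟨t, ht, rfl⟩
  have hk : G.dist w b ≠ 0 := fun hk => hw (hG.eq_of_dist_eq_zero hk ▸ hb)
  obtain ⟨a, hba, haw⟩ := exists_adj_dist_eq_of_dist_eq_succ
    (by rw [G.dist_comm]; omega : G.dist b w = (G.dist w b - 1) + 1)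
  rw [G.dist_comm] at haw
  obtain hk1 | hk2 := Nat.lt_or_ge (G.dist w b) 2
  · obtain rfl : w = a := hG.eq_of_dist_eq_zero (by omega)
    exact ⟨b, hba.symm, hh.eq_edgeHalf hG hba.symm hb fun ha => by have := hmin _ ha; omega⟩
  exfalso
  obtain ⟨c, hac, hcw⟩ := exists_adj_dist_eq_of_dist_eq_succ
    (by rw [G.dist_comm]; omega : G.dist a w = (G.dist w b - 2) + 1)
  rw [G.dist_comm] at hcw
  have hsub := hG.subset_edgeHalf_of_forall_dist_le hh hb hmin hba hac (by omega) (by omega)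
  rcases hmax _ (isHalfspace_edgeHalf hac.symm) hsub with hEq | hwc
  · have := hmin a (hEq ▸ right_mem_edgeHalf hac.symm)
    omega
  · rw [mem_edgeHalf] at hwc
    omega

theorem IsCCC.exists_adj_edgeHalf_mem_inter (hG : IsCCC G) {x y : Set (Set V)} (hx : IsUltra G x)
    (hy : IsUltra G y) {g : Set V} (hgx : g ∈ x) (hgy : g ∈ y) {w : V} (hwg : w ∉ g) :
    ∃ b, G.Adj w b ∧ edgeHalf G w b ∈ x ∧ edgeHalf G w b ∈ y := by
  obtain ⟨p, hp⟩ := (hx.1 g hgx).nonempty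
  set S := {k | k ∈ x ∧ k ∈ y ∧ w ∉ k ∧ g ⊆ k}
  have hS : S.Finite :=
    (hG.finite_separating w p).subset fun k ⟨hkx, _, hwk, hgk⟩ => ⟨hx.1 k hkx, hgk hp, hwk⟩
  obtain ⟨M, ⟨hMx, hMy, hwM, hgM⟩, hMmax⟩ := hS.exists_maximal ⟨g, hgx, hgy, hwg, subset_rfl⟩
  obtain ⟨b, hwb, rfl⟩ := hG.exists_adj_eq_edgeHalf (hx.1 M hMx) hwM fun k hk hMk => by
    by_cases hwk : w ∈ k
    · exact Or.inr hwk
    · exact Or.inl (hMk.antisymm' (hMmax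
        ⟨hx.mem_of_subset hMx hk hMk, hy.mem_of_subset hMy hk hMk, hwk, hgM.trans hMk⟩ hMk))
  exact ⟨b, hwb, hMx, hMy⟩

theorem NoExtremal.exists_adj_not_spansSquare (hne : NoExtremal G) {v a : V} (hva : G.Adj v a) :
    ∃ b, G.Adj v b ∧ b ≠ a ∧ ¬ SpansSquare G v a b := by
  by_contra! h
  exact hne v ⟨a, hva, h⟩

theorem IsCCC.exists_adj_edgeHalf_notMem (hG : IsCCC G) (hne : NoExtremal G) {x y : Set (Set V)}
    (hx : IsUltra G x) (hy : IsUltra G y) {g : Set V} (hgx : g ∈ x) (hgy : g ∈ y) {w : V}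
    (hwg : w ∉ g) : ∃ b, G.Adj w b ∧ edgeHalf G w b ∉ x ∧ edgeHalf G w b ∉ y := by
  obtain ⟨a, hwa, hax, hay⟩ := hG.exists_adj_edgeHalf_mem_inter hx hy hgx hgy hwg
  obtain ⟨b, hwb, hsq⟩ := hne.exists_adj_not_spansSquare hwa
  have hdisj : ∀ σ : Set (Set V), IsUltra G σ → edgeHalf G w a ∈ σ → edgeHalf G w b ∉ σ :=
    fun σ hσ haσ hbσ => by
      obtain ⟨t, hta, htb⟩ := hσ.2.2 _ haσ _ hbσ
      exact hsq.2 (hG.spansSquare_of_mem_edgeHalf hwa hwb hsq.1.symm hta htb)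
  exact ⟨b, hwb, hdisj x hx hax, hdisj y hy hay⟩

end HyperplanesAtAVertex

section Rays

theorem IsCCC.edgeHalf_ssubset (hG : IsCCC G) {a v b : V} (hav : G.Adj a v) (hvb : G.Adj v b)
    (hba : b ≠ a) (hsq : ¬ SpansSquare G v a b) : edgeHalf G v b ⊂ edgeHalf G a v := by
  refine ⟨fun x hxb => ?_, fun hsub => left_notMem_edgeHalf v b (hsub (right_mem_edgeHalf hav))⟩
  by_contra hxa
  rw [← Set.mem_compl_iff, hG.compl_edgeHalf hav] at hxa
  exact hsq (hG.spansSquare_of_mem_edgeHalf hav.symm hvb hba.symm hxa hxb)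

theorem NoExtremal.exists_ray (hne : NoExtremal G) {w b : V} (hwb : G.Adj w b) :
    ∃ r : ℕ → V, r 0 = w ∧ r 1 = b ∧ ∀ n, G.Adj (r n) (r (n + 1)) ∧ r (n + 2) ≠ r n ∧
      ¬ SpansSquare G (r (n + 1)) (r n) (r (n + 2)) := by
  choose! next hnext using fun v a (hva : G.Adj v a) => hne.exists_adj_not_spansSquare hva
  set e : ℕ → V × V := fun n => (fun s : V × V => (s.2, next s.2 s.1))^[n] (w, b)
  have he : ∀ n, e (n + 1) = ((e n).2, next (e n).2 (e n).1) :=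
    fun n => Function.iterate_succ_apply' _ n _
  have hadj : ∀ n, G.Adj (e n).1 (e n).2 := by
    intro n
    induction n with
    | zero => exact hwb
    | succ n ih => rw [he]; exact (hnext _ _ ih.symm).1
  refine ⟨fun n => (e n).1, rfl, by simp [he, e], fun n => ?_⟩
  simp only [he]
  exact ⟨hadj n, (hnext _ _ (hadj n).symm).2⟩

variable {r : ℕ → V}

theorem mem_edgeHalf_ray_iff (hr : ∀ n, G.Adj (r n) (r (n + 1)))
    (hanti : StrictAnti fun n => edgeHalf G (r n) (r (n + 1))) {m n : ℕ} :
    r m ∈ edgeHalf G (r n) (r (n + 1)) ↔ n < m := by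
  constructor
  · intro hm
    by_contra! hmn
    exact left_notMem_edgeHalf _ _ (hanti.antitone hmn hm)
  · intro hnm
    obtain ⟨k, rfl⟩ := Nat.exists_eq_add_of_lt hnm
    exact hanti.antitone (Nat.le_add_right n k) (right_mem_edgeHalf (hr (n + k)))

theorem IsCCC.ray_crossing_cases (hG : IsCCC G) (hr : ∀ n, G.Adj (r n) (r (n + 1))) {g : Set V}
    (hg : IsHalfspace G g) :
    (∃ n, g = edgeHalf G (r n) (r (n + 1))) ∨ (∃ n, gᶜ = edgeHalf G (r n) (r (n + 1))) ∨
      ∀ m, (r m ∈ g ↔ r 0 ∈ g) := by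
  rw [or_iff_not_imp_left, or_iff_not_imp_left]
  intro hin hout m
  induction m with
  | zero => rfl
  | succ m ih =>
    rw [← ih]
    by_cases hm : r m ∈ g
    · exact iff_of_true (by_contra fun h =>
        hout ⟨m, (hg.compl hG).eq_edgeHalf hG (hr m) h (not_not.2 hm)⟩) hm
    · exact iff_of_false (fun h => hin ⟨m, hg.eq_edgeHalf hG (hr m) h hm⟩) hm

theorem IsCCC.mem_rayEnd_or_compl_mem (hG : IsCCC G) (hr : ∀ n, G.Adj (r n) (r (n + 1)))
    (hanti : StrictAnti fun n => edgeHalf G (r n) (r (n + 1))) {g : Set V}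
    (hg : IsHalfspace G g) : g ∈ rayEnd G r ∨ gᶜ ∈ rayEnd G r := by
  rcases hG.ray_crossing_cases hr hg with ⟨n, rfl⟩ | ⟨n, hn⟩ | hconst
  · exact Or.inl ⟨hg, n + 1, fun m hm => (mem_edgeHalf_ray_iff hr hanti).2 (by omega)⟩
  · exact Or.inr ⟨hg.compl hG, n + 1,
      fun m hm => hn ▸ (mem_edgeHalf_ray_iff hr hanti).2 (by omega)⟩
  · by_cases h0 : r 0 ∈ g
    · exact Or.inl ⟨hg, 0, fun m _ => (hconst m).2 h0⟩
    · exact Or.inr ⟨hg.compl hG, 0, fun m _ hm => h0 ((hconst m).1 hm)⟩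

theorem IsCCC.isUltra_rayEnd (hG : IsCCC G) (hr : ∀ n, G.Adj (r n) (r (n + 1)))
    (hanti : StrictAnti fun n => edgeHalf G (r n) (r (n + 1))) : IsUltra G (rayEnd G r) := by
  refine ⟨fun h hh => hh.1,
    fun h hh => ⟨?_, (hG.mem_rayEnd_or_compl_mem hr hanti hh).resolve_right⟩,
    fun g ⟨_, N, hN⟩ k ⟨_, M, hM⟩ => ⟨r (max N M), hN _ (le_max_left _ _), hM _ (le_max_right _ _)⟩⟩
  rintro ⟨_, N, hN⟩ ⟨_, M, hM⟩
  exact hM (max N M) (le_max_right _ _) (hN _ (le_max_left _ _))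

theorem IsCCC.rayEnd_ne_princ (hG : IsCCC G) (hr : ∀ n, G.Adj (r n) (r (n + 1)))
    (hanti : StrictAnti fun n => edgeHalf G (r n) (r (n + 1))) (u : V) : rayEnd G r ≠ princ G u := by
  intro hu
  have hsep : ∀ n, edgeHalf G (r n) (r (n + 1)) ∈
      {h : Set V | IsHalfspace G h ∧ u ∈ h ∧ r 0 ∉ h} := fun n => by
    have hmem : edgeHalf G (r n) (r (n + 1)) ∈ rayEnd G r :=
      ⟨isHalfspace_edgeHalf (hr n), n + 1, fun m hm => (mem_edgeHalf_ray_iff hr hanti).2 (by omega)⟩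
    rw [hu] at hmem
    exact ⟨hmem.1, hmem.2, fun h0 => by simpa using (mem_edgeHalf_ray_iff hr hanti).1 h0⟩
  exact Set.infinite_range_of_injective hanti.injective
    ((hG.finite_separating (r 0) u).subset (Set.range_subset_iff.2 hsep))

theorem IsCCC.subset_of_mem_rayEnd (hG : IsCCC G) (hr : ∀ n, G.Adj (r n) (r (n + 1)))
    (hanti : StrictAnti fun n => edgeHalf G (r n) (r (n + 1))) {g : Set V} (hg : g ∈ rayEnd G r)
    (h0 : r 0 ∉ g) : g ⊆ edgeHalf G (r 0) (r 1) := by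
  obtain ⟨hh, N, hN⟩ := hg
  rcases hG.ray_crossing_cases hr hh with ⟨n, rfl⟩ | ⟨n, hn⟩ | hconst
  · exact hanti.antitone (Nat.zero_le n)
  · have hout : r (max N (n + 1)) ∈ gᶜ := hn ▸ (mem_edgeHalf_ray_iff hr hanti).2 (by omega)
    exact absurd (hN _ (le_max_left _ _)) hout
  · exact absurd ((hconst N).1 (hN N le_rfl)) h0

theorem IsCCC.exists_isBdryPt_subset_edgeHalf (hG : IsCCC G) (hne : NoExtremal G) {w b : V}
    (hwb : G.Adj w b) : ∃ z, IsBdryPt G z ∧ ∀ g ∈ z, w ∉ g → g ⊆ edgeHalf G w b := by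
  obtain ⟨r, rfl, rfl, hr⟩ := hne.exists_ray hwb
  have hadj : ∀ n, G.Adj (r n) (r (n + 1)) := fun n => (hr n).1
  have hanti : StrictAnti fun n => edgeHalf G (r n) (r (n + 1)) := strictAnti_nat_of_succ_lt
    fun n => hG.edgeHalf_ssubset (hr n).1 (hr (n + 1)).1 (hr n).2.1 (hr n).2.2
  exact ⟨rayEnd G r, ⟨hG.isUltra_rayEnd hadj hanti, hG.rayEnd_ne_princ hadj hanti⟩,
    fun g hg h0 => hG.subset_of_mem_rayEnd hadj hanti hg h0⟩

end Rays

theorem IsCCC.exists_isBdryPt_mem_rInterval (hG : IsCCC G) (hne : NoExtremal G)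
    {x y μ : Set (Set V)} (hx : IsUltra G x) (hy : IsUltra G y) (hμ : IsUltra G μ)
    (hμxy : μ ∉ rInterval G x y) :
    ∃ z, IsBdryPt G z ∧ μ ∈ rInterval G x z ∧ μ ∈ rInterval G y z := by
  obtain ⟨w, rfl⟩ | hμb := em (∃ w, μ = princ G w)
  swap
  · exact ⟨μ, ⟨hμ, fun w hw => hμb ⟨w, hw⟩⟩, ⟨hμ, Set.inter_subset_right⟩,
      ⟨hμ, Set.inter_subset_right⟩⟩
  obtain ⟨g, ⟨hgx, hgy⟩, hgw⟩ := Set.not_subset.1 fun h => hμxy ⟨hμ, h⟩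
  obtain ⟨b, hwb, hbx, hby⟩ :=
    hG.exists_adj_edgeHalf_notMem hne hx hy hgx hgy fun hw => hgw ⟨hx.1 g hgx, hw⟩
  obtain ⟨z, hz, hzb⟩ := hG.exists_isBdryPt_subset_edgeHalf hne hwb
  have hsub : ∀ σ, IsUltra G σ → edgeHalf G w b ∉ σ → σ ∩ z ⊆ princ G w :=
    fun σ hσ hbσ k ⟨hkσ, hkz⟩ => ⟨hσ.1 k hkσ, by_contra fun hwk =>
      hbσ (hσ.mem_of_subset hkσ (isHalfspace_edgeHalf hwb) (hzb k hkz hwk))⟩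
  exact ⟨z, hz, ⟨hμ, hsub x hx hbx⟩, ⟨hμ, hsub y hy hby⟩⟩

section GromovProducts

theorem grom_eq_zero_iff {v : V} {x y : Set (Set V)} :
    grom G v x y = 0 ↔ ∀ g ∈ x, g ∈ y → v ∈ g := by
  rw [grom, Set.encard_eq_zero, Set.eq_empty_iff_forall_notMem]
  exact forall_congr' fun g =>
    ⟨fun h hx hy => not_not.1 fun hv => h ⟨hx, hy, hv⟩, fun h ⟨hx, hy, hv⟩ => hv (h hx hy)⟩

theorem grom_ne_zero_of_mem {v : V} {x y : Set (Set V)} {g : Set V} (hx : g ∈ x) (hy : g ∈ y)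
    (hv : v ∉ g) : grom G v x y ≠ 0 :=
  fun h => hv (grom_eq_zero_iff.1 h g hx hy)

theorem grom_le_of_mem_rInterval {v : V} {x z μ : Set (Set V)} (h : μ ∈ rInterval G x z) :
    grom G v x z ≤ grom G v x μ :=
  Set.encard_le_encard fun _ ⟨hx, hz, hv⟩ => ⟨hx, h.2 ⟨hx, hz⟩, hv⟩

theorem IsCCC.grom_eq_encard_add_ite (hG : IsCCC G) {α β : Set (Set V)} (hα : IsUltra G α)
    {a b : V} (hab : G.Adj a b) [Decidable (edgeHalf G a b ∈ α ∩ β)] :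
    grom G a α β = {g | g ∈ α ∧ g ∈ β ∧ a ∉ g ∧ b ∉ g}.encard +
      if edgeHalf G a b ∈ α ∩ β then 1 else 0 := by
  have hsplit : {g | g ∈ α ∧ g ∈ β ∧ a ∉ g} =
      {g | g ∈ α ∧ g ∈ β ∧ a ∉ g ∧ b ∉ g} ∪ {edgeHalf G a b} ∩ (α ∩ β) := by
    ext g
    constructor
    · rintro ⟨hgα, hgβ, hag⟩
      by_cases hbg : b ∈ g
      · exact Or.inr ⟨(hα.1 g hgα).eq_edgeHalf hG hab hbg hag, hgα, hgβ⟩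
      · exact Or.inl ⟨hgα, hgβ, hag, hbg⟩
    · rintro (⟨hgα, hgβ, hag, -⟩ | ⟨rfl, hgα, hgβ⟩)
      exacts [⟨hgα, hgβ, hag⟩, ⟨hgα, hgβ, left_notMem_edgeHalf a b⟩]
  rw [grom, hsplit, Set.encard_union_eq]
  · split_ifs with h <;> simp [h]
  · exact Set.disjoint_left.2 fun g hg ⟨hgH, _⟩ => hg.2.2.2 (hgH ▸ right_mem_edgeHalf hab)

open Classical in
theorem IsCCC.grom_add_ite_add_ite (hG : IsCCC G) {α β : Set (Set V)} (hα : IsUltra G α)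
    (hβ : IsUltra G β) {u v : V} (huv : G.Adj u v) :
    grom G v α β + ((if edgeHalf G u v ∈ α then 1 else 0) + if edgeHalf G u v ∈ β then 1 else 0)
      = grom G u α β + 1 := by
  have hC : {g | g ∈ α ∧ g ∈ β ∧ v ∉ g ∧ u ∉ g} = {g | g ∈ α ∧ g ∈ β ∧ u ∉ g ∧ v ∉ g} := by
    ext g
    exact and_congr_right' (and_congr_right' and_comm)
  rw [hG.grom_eq_encard_add_ite hα huv, hG.grom_eq_encard_add_ite hα huv.symm, hC,
    ← hG.compl_edgeHalf huv]
  have hH := isHalfspace_edgeHalf huv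
  simp only [Set.mem_inter_iff, hα.compl_mem_iff hH, hβ.compl_mem_iff hH]
  by_cases h1 : edgeHalf G u v ∈ α <;> by_cases h2 : edgeHalf G u v ∈ β <;> simp [h1, h2, add_assoc]

theorem tripEquiv_of_add_eq {p q : ℕ∞ × ℕ∞ × ℕ∞} {k l : ℕ} (h : p + k = q + l) :
    TripEquiv p q := by
  have cancel : ∀ {a b : ℕ∞} {k d : ℕ}, a + k = b + ↑(k + d) → a = b + d := by
    intro a b k d h
    rw [Nat.cast_add, add_comm (k : ℕ∞), ← add_assoc] at h
    exact WithTop.add_right_cancel (ENat.natCast_ne_top k) h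
  simp only [Prod.ext_iff, Prod.fst_add, Prod.snd_add, Prod.fst_natCast, Prod.snd_natCast] at h
  obtain ⟨h1, h2, h3⟩ := h
  rcases le_total k l with hkl | hlk
  · obtain ⟨d, rfl⟩ := Nat.exists_eq_add_of_le hkl
    exact Or.inl ⟨d, cancel h1, cancel h2, cancel h3⟩
  · obtain ⟨d, rfl⟩ := Nat.exists_eq_add_of_le hlk
    exact Or.inr ⟨d, cancel h1.symm, cancel h2.symm, cancel h3.symm⟩

open Classical in
theorem IsCCC.exists_tripod_add_eq_of_adj (hG : IsCCC G) {x1 x2 y z : Set (Set V)}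
    (hx1 : IsUltra G x1) (hx2 : IsUltra G x2) (hy : IsUltra G y) (hz : IsUltra G z) {u v : V}
    (huv : G.Adj u v) : ∃ k l : ℕ, tripod G u x1 x2 y z + k = tripod G v x1 x2 y z + l := by
  have hshift : ∀ {a a' b b' s t : ℕ∞}, a' + s = a + 1 → b' + t = b + 1 →
      a + b + 2 = a' + b' + (s + t) := by
    intro a a' b b' s t ha hb
    rw [← one_add_one_eq_two, add_add_add_comm, ← ha, ← hb]
    ring
  -- each entry is shifted by `2 - #{x₁, x₂, y, z lying in the halfspace of (u, v) containing v}`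
  let i : Set (Set V) → ℕ := fun σ => if edgeHalf G u v ∈ σ then 1 else 0
  refine ⟨2, i x1 + i x2 + i y + i z, ?_⟩
  simp only [tripod, Prod.ext_iff, Prod.fst_add, Prod.snd_add, Prod.fst_natCast, Prod.snd_natCast]
  push_cast [i, Nat.cast_ite]
  have e : ∀ {α β : Set (Set V)}, IsUltra G α → IsUltra G β → _ :=
    fun hα hβ => hG.grom_add_ite_add_ite hα hβ huv
  refine ⟨?_, ?_, ?_⟩
  · exact (hshift (e hx1 hx2) (e hy hz)).trans (by ring)
  · exact (hshift (e hx1 hy) (e hx2 hz)).trans (by ring)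
  · exact (hshift (e hx1 hz) (e hx2 hy)).trans (by ring)

theorem IsCCC.tripEquiv_tripod (hG : IsCCC G) {x1 x2 y z : Set (Set V)} (hx1 : IsUltra G x1)
    (hx2 : IsUltra G x2) (hy : IsUltra G y) (hz : IsUltra G z) (u v : V) :
    TripEquiv (tripod G u x1 x2 y z) (tripod G v x1 x2 y z) := by
  suffices ∃ k l : ℕ, tripod G u x1 x2 y z + k = tripod G v x1 x2 y z + l from
    let ⟨_, _, h⟩ := this; tripEquiv_of_add_eq h
  obtain ⟨W⟩ := hG.1.preconnected u v
  induction W with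
  | nil => exact ⟨0, 0, rfl⟩
  | @cons u w v huw W ih =>
    obtain ⟨k, l, h⟩ := hG.exists_tripod_add_eq_of_adj hx1 hx2 hy hz huw
    obtain ⟨k', l', h'⟩ := ih
    refine ⟨k + k', l + l', ?_⟩
    calc tripod G u x1 x2 y z + ↑(k + k') = tripod G u x1 x2 y z + k + k' := by push_cast; ring
      _ = tripod G w x1 x2 y z + k' + l := by rw [h]; ring
      _ = tripod G v x1 x2 y z + ↑(l + l') := by rw [h']; push_cast; ring

theorem TripEquiv.fst_lt_min_iff {p q : ℕ∞ × ℕ∞ × ℕ∞} (h : TripEquiv p q) :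
    p.1 < min p.2.1 p.2.2 ↔ q.1 < min q.2.1 q.2.2 := by
  have key : ∀ {a b c : ℕ∞} (n : ℕ), a + n < min (b + n) (c + n) ↔ a < min b c := fun n => by
    rw [min_add_add_right, ENat.add_lt_add_iff_right (ENat.natCast_ne_top n)]
  rcases h with ⟨n, h1, h2, h3⟩ | ⟨n, h1, h2, h3⟩ <;> rw [h1, h2, h3, key]

end GromovProducts

section Opposition

variable {x1 x2 y z : Set (Set V)} {p : V}

theorem tripod_eq_of_med_eq_princ (hm : med x1 x2 y = princ G p) :
    tripod G p x1 x2 y z = (grom G p y z, grom G p x2 z, grom G p x1 z) := by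
  have h12 : grom G p x1 x2 = 0 :=
    grom_eq_zero_iff.2 fun _ h1 h2 => mem_of_med_eq_princ hm (mem_med_of_mem₁₂ h1 h2)
  have h1y : grom G p x1 y = 0 :=
    grom_eq_zero_iff.2 fun _ h1 hy => mem_of_med_eq_princ hm (mem_med_of_mem₁₃ h1 hy)
  have h2y : grom G p x2 y = 0 :=
    grom_eq_zero_iff.2 fun _ h2 hy => mem_of_med_eq_princ hm (mem_med_of_mem₂₃ h2 hy)
  simp only [tripod, h12, h1y, h2y, zero_add, add_zero]

theorem not_op_of_grom_ne_zero (hx1 : IsUltra G x1) (hx2 : IsUltra G x2) (hy : IsUltra G y)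
    (hz : IsUltra G z) (hm : med x1 x2 y = princ G p) (h1 : grom G p x1 z ≠ 0)
    (h2 : grom G p x2 z ≠ 0) : ¬ Op G x1 x2 y := by
  rintro ⟨-, hI⟩
  obtain ⟨k₁, hk₁x₁, hk₁z, hk₁p⟩ : ∃ k ∈ x1, k ∈ z ∧ p ∉ k := by
    simpa [grom_eq_zero_iff] using h1
  obtain ⟨k₂, hk₂x₂, hk₂z, hk₂p⟩ : ∃ k ∈ x2, k ∈ z ∧ p ∉ k := by
    simpa [grom_eq_zero_iff] using h2
  have hmed : IsUltra G (med x1 x2 z) := hx1.med hx2 hz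
  have hI' : med x1 x2 z ∈ rInterval G x1 x2 := ⟨hmed, fun g hg => mem_med_of_mem₁₂ hg.1 hg.2⟩
  have hk₁c₂ : k₁ᶜ ∈ x2 := hx2.compl_mem (hx1.1 _ hk₁x₁) fun h =>
    hk₁p (mem_of_med_eq_princ hm (mem_med_of_mem₁₂ hk₁x₁ h))
  have hk₁cy : k₁ᶜ ∈ y := hy.compl_mem (hx1.1 _ hk₁x₁) fun h =>
    hk₁p (mem_of_med_eq_princ hm (mem_med_of_mem₁₃ hk₁x₁ h))
  have hk₂c₁ : k₂ᶜ ∈ x1 := hx1.compl_mem (hx2.1 _ hk₂x₂) fun h =>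
    hk₂p (mem_of_med_eq_princ hm (mem_med_of_mem₁₂ h hk₂x₂))
  have hk₂cy : k₂ᶜ ∈ y := hy.compl_mem (hx2.1 _ hk₂x₂) fun h =>
    hk₂p (mem_of_med_eq_princ hm (mem_med_of_mem₂₃ hk₂x₂ h))
  rw [hI] at hI'
  rcases hI' with ⟨-, hsub⟩ | ⟨-, hsub⟩
  · exact hmed.compl_notMem (mem_med_of_mem₂₃ hk₂x₂ hk₂z)
      (hsub ⟨hk₂c₁, mem_med_of_mem₁₃ hk₂c₁ hk₂cy⟩)
  · exact hmed.compl_notMem (mem_med_of_mem₁₃ hk₁x₁ hk₁z)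
      (hsub ⟨mem_med_of_mem₂₃ hk₁c₂ hk₁cy, hk₁c₂⟩)

theorem exists_halfspaces_of_rInterval_ne
    (hI : rInterval G x1 x2 ≠ rInterval G x1 (med x1 x2 y) ∪ rInterval G (med x1 x2 y) x2) :
    ∃ σ ∈ rInterval G x1 x2, ∃ A B : Set V, A ∈ x1 ∧ A ∈ y ∧ A ∉ σ ∧ B ∈ x2 ∧ B ∈ y ∧ B ∉ σ := by
  have hsub : rInterval G x1 (med x1 x2 y) ∪ rInterval G (med x1 x2 y) x2 ⊆ rInterval G x1 x2 := by
    rintro σ (⟨hσ, h⟩ | ⟨hσ, h⟩)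
    · exact ⟨hσ, fun g hg => h ⟨hg.1, mem_med_of_mem₁₂ hg.1 hg.2⟩⟩
    · exact ⟨hσ, fun g hg => h ⟨mem_med_of_mem₁₂ hg.1 hg.2, hg.2⟩⟩
  obtain ⟨σ, ⟨hσ, h12σ⟩, hσU⟩ := Set.not_subset.1 fun h => hI (h.antisymm hsub)
  obtain ⟨A, ⟨hA1, hAm⟩, hAσ⟩ := Set.not_subset.1 fun h => hσU (Or.inl ⟨hσ, h⟩)
  obtain ⟨B, ⟨hBm, hB2⟩, hBσ⟩ := Set.not_subset.1 fun h => hσU (Or.inr ⟨hσ, h⟩)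
  refine ⟨σ, ⟨hσ, h12σ⟩, A, B, hA1, ?_, hAσ, hB2, ?_, hBσ⟩
  · rcases mem_med.1 hAm with ⟨-, h⟩ | ⟨h, -⟩ | ⟨h, -⟩
    · exact absurd (h12σ ⟨hA1, h⟩) hAσ
    · exact absurd (h12σ ⟨hA1, h⟩) hAσ
    · exact h
  · rcases mem_med.1 hBm with ⟨h, -⟩ | ⟨-, h⟩ | ⟨-, h⟩
    · exact absurd (h12σ ⟨h, hB2⟩) hBσ
    · exact h
    · exact absurd (h12σ ⟨h, hB2⟩) hBσ

theorem grom_med_princ_eq_zero (hx1 : IsUltra G x1) (hx2 : IsUltra G x2)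
    (hm : med x1 x2 y = princ G p) {σ : Set (Set V)} (hσ : IsUltra G σ) (h12σ : x1 ∩ x2 ⊆ σ)
    (q : V) : grom G p y (med (princ G q) x2 σ) = 0 := by
  refine grom_eq_zero_iff.2 fun g hgy hg => ?_
  have h2 : g ∈ x2 → p ∈ g := fun h => mem_of_med_eq_princ hm (mem_med_of_mem₂₃ h hgy)
  rcases mem_med.1 hg with ⟨-, h⟩ | ⟨h, -⟩ | ⟨hgσ, hgq⟩
  · exact h2 h
  · exact h2 h
  · by_contra hp
    have h1 : g ∉ x1 := fun h => hp (mem_of_med_eq_princ hm (mem_med_of_mem₁₃ h hgy))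
    exact hσ.compl_notMem hgσ
      (h12σ ⟨hx1.compl_mem hgq.1 h1, hx2.compl_mem hgq.1 fun h => hp (h2 h)⟩)

theorem IsCCC.grom_med_princ_ne_top (hG : IsCCC G) (hm : med x1 x2 y = princ G p)
    (σ : Set (Set V)) (q : V) : grom G p x1 (med (princ G q) x2 σ) ≠ ⊤ := by
  refine Set.encard_ne_top_iff.2 ((hG.finite_separating p q).subset fun g ⟨h1, hg, hp⟩ => ?_)
  have h2 : g ∉ x2 := fun h2 => hp (mem_of_med_eq_princ hm (mem_med_of_mem₁₂ h1 h2))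
  rcases mem_med.1 hg with ⟨hq, -⟩ | ⟨h, -⟩ | ⟨-, hq⟩
  · exact ⟨hq.1, hq.2, hp⟩
  · exact absurd h h2
  · exact ⟨hq.1, hq.2, hp⟩

theorem IsCCC.exists_isBdryPt_of_not_op (hG : IsCCC G) (hne : NoExtremal G) (hx1 : IsUltra G x1)
    (hx2 : IsUltra G x2) (hy : IsUltra G y) (hm : med x1 x2 y = princ G p)
    (hnop : ¬ Op G x1 x2 y) :
    ∃ z, IsBdryPt G z ∧ grom G p y z = 0 ∧ grom G p x1 z ≠ 0 ∧ grom G p x1 z ≠ ⊤ ∧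
      grom G p x2 z ≠ 0 := by
  obtain ⟨σ, ⟨hσ, h12σ⟩, A, B, hA1, hAy, hAσ, hB2, hBy, hBσ⟩ :=
    exists_halfspaces_of_rInterval_ne fun hI => hnop ⟨⟨p, hm⟩, hI⟩
  have hA := hx1.1 A hA1
  have hB := hx2.1 B hB2
  have hpA : p ∈ A := mem_of_med_eq_princ hm (mem_med_of_mem₁₃ hA1 hAy)
  have hpB : p ∈ B := mem_of_med_eq_princ hm (mem_med_of_mem₂₃ hB2 hBy)
  have hAc2 : Aᶜ ∈ x2 := hx2.compl_mem hA fun h => hAσ (h12σ ⟨hA1, h⟩)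
  have hBc1 : Bᶜ ∈ x1 := hx1.compl_mem hB fun h => hBσ (h12σ ⟨h, hB2⟩)
  obtain ⟨q, hqA, hqB⟩ := hσ.2.2 _ (hσ.compl_mem hA hAσ) _ (hσ.compl_mem hB hBσ)
  set μ := med (princ G q) x2 σ
  have hμ : IsUltra G μ := (isUltra_princ hG q).med hx2 hσ
  have hAμ : Aᶜ ∈ μ := mem_med_of_mem₂₃ hAc2 (hσ.compl_mem hA hAσ)
  have hBμ : Bᶜ ∈ μ := mem_med_of_mem₁₃ ⟨hB.compl hG, hqB⟩ (hσ.compl_mem hB hBσ)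
  obtain ⟨z, hz, h1z, hyz⟩ := hG.exists_isBdryPt_mem_rInterval hne hx1 hy hμ
    fun h => hμ.compl_notMem (h.2 ⟨hA1, hAy⟩) hAμ
  have hAz : Aᶜ ∈ z := mem_of_mem_rInterval hy hz.1 hyz hAμ (hy.compl_notMem hAy)
  have hBz : Bᶜ ∈ z := mem_of_mem_rInterval hy hz.1 hyz hBμ (hy.compl_notMem hBy)
  refine ⟨z, hz, ?_, grom_ne_zero_of_mem hBc1 hBz (· hpB), ?_,
    grom_ne_zero_of_mem hAc2 hAz (· hpA)⟩
  · exact nonpos_iff_eq_zero.1 ((grom_le_of_mem_rInterval hyz).trans_eq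
      (grom_med_princ_eq_zero hx1 hx2 hm hσ h12σ q))
  · exact ((grom_le_of_mem_rInterval h1z).trans_lt (hG.grom_med_princ_ne_top hm σ q).lt_top).ne

theorem IsCCC.crtEq_of_med_eq_princ (hG : IsCCC G) (hx1 : IsUltra G x1) (hx2 : IsUltra G x2)
    (hy : IsUltra G y) (hz : IsUltra G z) (hm : med x1 x2 y = princ G p) :
    crtEq G x1 x2 y z (grom G p y z) (grom G p x2 z) (grom G p x1 z) :=
  fun v => tripod_eq_of_med_eq_princ hm ▸ hG.tripEquiv_tripod hx1 hx2 hy hz v p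

end Opposition

end CCCR

open CCCR
/-- Lemma `op vs lcrt`: for boundary points `x1, x2, y` with
`m(x1,x2,y) ∈ X`, the condition `x1 op_y x2` fails if and only if there is a
boundary point `z` with `crt(x1,x2,y,z) = ⟪a:b:c⟫` and `a < min{b,c} < +∞`. -/
theorem stmt6 {V : Type*} (G : SimpleGraph V) (hG : IsCCC G) (hne : NoExtremal G)
    (x1 x2 y : Set (Set V)) (h1 : IsBdryPt G x1) (h2 : IsBdryPt G x2)
    (hy : IsBdryPt G y) (hm : ∃ p : V, med x1 x2 y = princ G p) :
    ¬ Op G x1 x2 y ↔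
      ∃ (z : Set (Set V)) (a b c : ℕ∞), IsBdryPt G z ∧
        crtEq G x1 x2 y z a b c ∧ a < min b c ∧ min b c < ⊤ := by
  obtain ⟨p, hm⟩ := hm
  constructor
  · intro hnop
    obtain ⟨z, hz, hyz, h1z, h1z', h2z⟩ := hG.exists_isBdryPt_of_not_op hne h1.1 h2.1 hy.1 hm hnop
    refine ⟨z, _, _, _, hz, hG.crtEq_of_med_eq_princ h1.1 h2.1 hy.1 hz.1 hm, ?_,
      min_lt_of_right_lt h1z'.lt_top⟩
    rw [hyz, lt_min_iff]
    exact ⟨pos_iff_ne_zero.2 h2z, pos_iff_ne_zero.2 h1z⟩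
  · rintro ⟨z, a, b, c, hz, habc, hlt, -⟩
    have hp := habc p
    rw [tripod_eq_of_med_eq_princ hm] at hp
    obtain ⟨h2z, h1z⟩ := lt_min_iff.1 (hp.fst_lt_min_iff.2 hlt)
    exact not_op_of_grom_ne_zero h1.1 h2.1 hy.1 hz.1 hm (pos_of_gt h1z).ne' (pos_of_gt h2z).ne'
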